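/- arXiv:1801.06758 — 2 statements merged into one kernel-verified Lean document; each statement's English description precedes it below -/
import Mathlib

section
/- Let T be a finite index set and, for each t ∈ T, let A_t be a finite set of colors. For S ⊆ T define the discrepancy disc(S) = |S| − |⋃_{t∈S} A_t|. Suppose S ⊆ T attains the maximum of disc over all subsets of T. Then for every function f defined on S with f(t) ∈ A_t for all t ∈ S, there exists an injective function g on T∖S such that g(t) ∈ A_t ∖ f(S) for all t ∈ T∖S (where f(S) denotes the set of values of f). -/
/-!
Apply Hall's theorem on `T \ S` to the residual lists `A t \ f(S)`. For `W ⊆ T \ S`, every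
color of `⋃_{t ∈ W} A t` either is residual or is used by `f`, hence lies in `⋃_{t ∈ S} A t`.
So `|⋃_{S ∪ W} A| ≤ |⋃_S A| + |⋃_W (A \ f(S))|`, and maximality of `disc(S)` against
`disc(S ∪ W)` is exactly Hall's condition `|W| ≤ |⋃_W (A \ f(S))|`.
-/

open Finset

namespace Finset

variable {ι α : Type*} [DecidableEq α]

theorem exists_injOn_mem_of_forall_card_le_card_biUnion [Nonempty (ι → α)]
    (T : Finset ι) (B : ι → Finset α) (hall : ∀ W ⊆ T, #W ≤ #(W.biUnion B)) :
    ∃ g : ι → α, Set.InjOn g T ∧ ∀ t ∈ T, g t ∈ B t := by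
  classical
  have hall_subtype : ∀ s : Finset T, #s ≤ #(s.biUnion fun t => B t) := fun s => by
    have hs := hall (s.image Subtype.val) fun t ht => by
      obtain ⟨u, -, rfl⟩ := mem_image.mp ht
      exact u.2
    rwa [card_image_of_injective s Subtype.val_injective, image_biUnion] at hs
  obtain ⟨g, hg_inj, hg_mem⟩ := (all_card_le_biUnion_card_iff_exists_injective _).mp hall_subtype
  let g₀ : ι → α := Classical.arbitrary _
  refine ⟨fun t => if ht : t ∈ T then g ⟨t, ht⟩ else g₀ t, ?_, fun t ht => ?_⟩
  · intro a ha b hb hab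
    simp only [mem_coe] at ha hb
    simp only [dif_pos ha, dif_pos hb] at hab
    exact congrArg Subtype.val (hg_inj hab)
  · simpa only [dif_pos ht] using hg_mem ⟨t, ht⟩

theorem biUnion_subset_union_biUnion_sdiff (W : Finset ι) (A : ι → Finset α) (X : Finset α) :
    W.biUnion A ⊆ X ∪ W.biUnion fun t => A t \ X := by
  intro x hx
  obtain ⟨t, ht, hxA⟩ := mem_biUnion.mp hx
  by_cases hxX : x ∈ X
  · exact mem_union_left _ hxX
  · exact mem_union_right _ (mem_biUnion.mpr ⟨t, ht, mem_sdiff.mpr ⟨hxA, hxX⟩⟩)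

end Finset

theorem card_le_card_biUnion_sdiff_image_of_maximal
    {ι α : Type*} [DecidableEq ι] [DecidableEq α]
    {T : Finset ι} {A : ι → Finset α} {S : Finset ι} (hST : S ⊆ T)
    (hmax : ∀ S' ⊆ T,
      (S'.card : ℤ) - ((S'.biUnion A).card : ℤ) ≤
        (S.card : ℤ) - ((S.biUnion A).card : ℤ))
    {f : ι → α} (hf : ∀ t ∈ S, f t ∈ A t) {W : Finset ι} (hW : W ⊆ T \ S) :
    #W ≤ #(W.biUnion fun t => A t \ S.image f) := by
  have hf_used : S.image f ⊆ S.biUnion A := fun x hx => by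
    obtain ⟨t, ht, rfl⟩ := mem_image.mp hx
    exact mem_biUnion.mpr ⟨t, ht, hf t ht⟩
  have hunion_card :
      #((S ∪ W).biUnion A) ≤ #(S.biUnion A) + #(W.biUnion fun t => A t \ S.image f) :=
    calc #((S ∪ W).biUnion A)
        ≤ #(S.biUnion A ∪ (S.image f ∪ W.biUnion fun t => A t \ S.image f)) := by
          rw [union_biUnion]
          exact card_le_card (union_subset_union_right (biUnion_subset_union_biUnion_sdiff _ _ _))
      _ = #(S.biUnion A ∪ W.biUnion fun t => A t \ S.image f) := by
          rw [← union_assoc, union_eq_left.mpr hf_used]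
      _ ≤ _ := card_union_le _ _
  have hdisj : Disjoint S W := disjoint_left.mpr fun t htS htW => (mem_sdiff.mp (hW htW)).2 htS
  have hSW := hmax (S ∪ W) (union_subset hST (hW.trans sdiff_subset))
  rw [card_union_of_disjoint hdisj] at hSW
  omega

/-- The discrepancy lemma (abstract set-system form): if `S ⊆ T` maximizes the
discrepancy `|S| - |⋃_{t ∈ S} A t|` among subsets of `T`, then any choice
`f` of colors for `S` from the lists can be completed by injectively assigning
to each `t ∈ T \ S` a color of `A t` not used by `f` on `S`. -/
theorem discrepancy_extension
    {ι α : Type*} [DecidableEq ι] [DecidableEq α]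
    (T : Finset ι) (A : ι → Finset α)
    (S : Finset ι) (hST : S ⊆ T)
    (hmax : ∀ S' ⊆ T,
      (S'.card : ℤ) - ((S'.biUnion A).card : ℤ) ≤
        (S.card : ℤ) - ((S.biUnion A).card : ℤ))
    (f : ι → α) (hf : ∀ t ∈ S, f t ∈ A t) :
    ∃ g : ι → α, Set.InjOn g ↑(T \ S) ∧
      ∀ t ∈ T \ S, g t ∈ A t \ S.image f :=
  haveI : Nonempty (ι → α) := ⟨f⟩
  exists_injOn_mem_of_forall_card_le_card_biUnion (T \ S) _ fun _ hW =>
    card_le_card_biUnion_sdiff_image_of_maximal hST hmax hf hW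
end

section
/- Every connected simple graph with maximum degree at most 4 that contains a vertex of degree at most 3 is strongly 22-edge-choosable. -/
/-- Two edges are "close" (distance at most 1): some endpoint of one equals,
or is adjacent to, some endpoint of the other. In a strong edge-coloring,
distinct close edges must get distinct colors. -/
def EdgeClose {V : Type*} (G : SimpleGraph V) (e₁ e₂ : Sym2 V) : Prop :=
  ∃ u w, u ∈ e₁ ∧ w ∈ e₂ ∧ (u = w ∨ G.Adj u w)

/-- `c` is a strong edge-coloring of `G` (viewed as a function on all of `Sym2 V`,
only its values on edges of `G` matter). -/
def IsStrongEdgeColoringOn {V : Type*} (G : SimpleGraph V) (c : Sym2 V → ℕ) : Prop :=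
  ∀ e₁ ∈ G.edgeSet, ∀ e₂ ∈ G.edgeSet, e₁ ≠ e₂ → EdgeClose G e₁ e₂ → c e₁ ≠ c e₂

/-- `G` is strongly `L`-edge-colorable. -/
def StronglyLColorable {V : Type*} (G : SimpleGraph V) (L : Sym2 V → Finset ℕ) : Prop :=
  ∃ c : Sym2 V → ℕ, IsStrongEdgeColoringOn G c ∧ ∀ e ∈ G.edgeSet, c e ∈ L e

/-- `G` is strongly `k`-edge-choosable. -/
def StronglyEdgeChoosable {V : Type*} (G : SimpleGraph V) (k : ℕ) : Prop :=
  ∀ L : Sym2 V → Finset ℕ, (∀ e ∈ G.edgeSet, k ≤ (L e).card) → StronglyLColorable G L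

/-!
Fix a vertex `v` of degree at most 3 and colour the edges greedily in order of decreasing
distance `min (dist v x) (dist v y)` from `v`. When the edge `xy`, with `x` the endpoint closer
to `v`, receives its colour, every already coloured edge close to `xy` contains a neighbour `w`
of `x` or `y` with `w ∉ {x, y}` and `dist v x ≤ dist v w`. There are at most `2 · 4 - 2` such
neighbours, and one of them is lost: if `x ≠ v`, the next vertex on a shortest path from `x`
to `v` is closer to `v` than `x`; if `x = v`, then `x` has at most 3 neighbours. So at most
`5 · 4 = 20` colours are forbidden, and a list of 22 colours always has one left.
-/

open Finset

theorem Finset.exists_coloring_of_forall_exists_cover {α β γ : Type*} [LinearOrder β]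
    [Nonempty γ] {R : α → α → Prop} (hR : Std.Symm R) (r : α → β) (L : α → Finset γ)
    (S : Finset α)
    (hS : ∀ a ∈ S, ∃ t : Finset α, #t < #(L a) ∧ ∀ b ∈ S, b ≠ a → R a b → r a ≤ r b → b ∈ t) :
    ∃ c : α → γ, (∀ a ∈ S, c a ∈ L a) ∧ ∀ a ∈ S, ∀ b ∈ S, a ≠ b → R a b → c a ≠ c b := by
  classical
  suffices h : ∀ s ⊆ S, ∃ c : α → γ, (∀ a ∈ s, c a ∈ L a) ∧
      ∀ a ∈ s, ∀ b ∈ s, a ≠ b → R a b → c a ≠ c b from h S subset_rfl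
  intro s
  induction s using Finset.induction_on_min_value r with
  | empty => exact fun _ => ⟨fun _ => Classical.arbitrary _, by simp, by simp⟩
  | insert a s ha hmin ih =>
    intro hsub
    obtain ⟨c, hcL, hc⟩ := ih ((subset_insert a s).trans hsub)
    obtain ⟨t, ht, hcover⟩ := hS a (hsub (mem_insert_self a s))
    obtain ⟨x, hxL, hxt⟩ := exists_mem_notMem_of_card_lt_card (card_image_le.trans_lt ht)
    have hfresh : ∀ b ∈ s, R a b → c b ≠ x := fun b hb hab hbx =>
      hxt (hbx ▸ mem_image_of_mem c
        (hcover b (hsub (mem_insert_of_mem hb)) (ne_of_mem_of_not_mem hb ha) hab (hmin b hb)))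
    refine ⟨Function.update c a x, fun b hb => ?_, fun b hb b' hb' hne hbb' => ?_⟩
    · rcases mem_insert.1 hb with rfl | hb
      · simpa using hxL
      · simpa [ne_of_mem_of_not_mem hb ha] using hcL b hb
    · rcases mem_insert.1 hb with rfl | hbs <;> rcases mem_insert.1 hb' with rfl | hbs'
      · exact absurd rfl hne
      · simpa [ne_of_mem_of_not_mem hbs' ha] using (hfresh b' hbs' hbb').symm
      · simpa [ne_of_mem_of_not_mem hbs ha] using hfresh b hbs (hR.symm _ _ hbb')
      · simpa [ne_of_mem_of_not_mem hbs ha, ne_of_mem_of_not_mem hbs' ha] using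
          hc b hbs b' hbs' hne hbb'

theorem EdgeClose.symm {V : Type*} {G : SimpleGraph V} {e f : Sym2 V} (h : EdgeClose G e f) :
    EdgeClose G f e :=
  let ⟨u, w, hu, hw, huw⟩ := h
  ⟨w, u, hw, hu, huw.imp Eq.symm SimpleGraph.Adj.symm⟩

theorem stronglyEdgeChoosable_of_forall_exists_cover {V β : Type*} [LinearOrder β]
    {G : SimpleGraph V} (hfin : G.edgeSet.Finite) (r : Sym2 V → β) {k : ℕ}
    (h : ∀ e ∈ G.edgeSet, ∃ t : Finset (Sym2 V), #t < k ∧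
      ∀ f ∈ G.edgeSet, f ≠ e → EdgeClose G e f → r e ≤ r f → f ∈ t) :
    StronglyEdgeChoosable G k := by
  intro L hL
  obtain ⟨c, hcL, hc⟩ := Finset.exists_coloring_of_forall_exists_cover
    ⟨fun _ _ => EdgeClose.symm⟩ r L hfin.toFinset fun e he => by
      obtain ⟨t, ht, hcover⟩ := h e (hfin.mem_toFinset.1 he)
      exact ⟨t, ht.trans_le (hL e (hfin.mem_toFinset.1 he)),
        fun f hf => hcover f (hfin.mem_toFinset.1 hf)⟩
  exact ⟨c, fun e he f hf => hc e (hfin.mem_toFinset.2 he) f (hfin.mem_toFinset.2 hf),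
    fun e he => hcL e (hfin.mem_toFinset.2 he)⟩

theorem Sym2.inf_le_of_mem {α : Type*} [SemilatticeInf α] {e : Sym2 α} {a : α} (h : a ∈ e) :
    e.inf ≤ a := by
  induction e with
  | _ b c => rcases Sym2.mem_iff.1 h with rfl | rfl <;> simp

namespace SimpleGraph

variable {V : Type*} {G : SimpleGraph V}

theorem exists_adj_dist_lt {u v : V} (h : G.dist u v ≠ 0) :
    ∃ w, G.Adj v w ∧ G.dist u w < G.dist u v := by
  rw [dist_comm] at h ⊢
  obtain ⟨p, hp⟩ := exists_walk_of_dist_ne_zero h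
  cases p with
  | nil => simp at h
  | cons hadj q =>
    refine ⟨_, hadj, ?_⟩
    rw [dist_comm, ← hp]
    simpa using dist_le q

theorem exists_adj_mem_of_edgeClose {x y a b : V} (hab : G.Adj a b) (hne : s(a, b) ≠ s(x, y))
    (hclose : EdgeClose G s(x, y) s(a, b)) :
    ∃ w ∈ s(a, b), (G.Adj x w ∧ w ≠ y) ∨ (G.Adj y w ∧ w ≠ x) := by
  obtain ⟨u, w, hu, hw, huw⟩ := hclose
  simp only [Sym2.mem_iff, ne_eq, Sym2.eq_iff] at *
  have hab' := hab.symm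
  have hab'' := hab.ne
  grind

variable [Fintype V] [DecidableRel G.Adj]

theorem card_filter_dist_le_neighborFinset_erase_add_two_le [DecidableEq V] {Δ : ℕ}
    (hconn : G.Connected) (hΔ : ∀ u, G.degree u ≤ Δ) {v x y : V} (hv : G.degree v < Δ)
    (hxy : G.Adj x y) (hd : G.dist v x ≤ G.dist v y) :
    #{w ∈ (G.neighborFinset x).erase y | G.dist v x ≤ G.dist v w} + 2 ≤ Δ := by
  have hy : y ∈ G.neighborFinset x := (mem_neighborFinset _ _ _).2 hxy
  have hcard := card_erase_add_one hy
  rw [card_neighborFinset_eq_degree] at hcard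
  by_cases hd0 : G.dist v x = 0
  · obtain rfl : v = x := hconn.dist_eq_zero_iff.1 hd0
    have := card_filter_le ((G.neighborFinset v).erase y) (fun w => G.dist v v ≤ G.dist v w)
    omega
  · obtain ⟨p, hxp, hp⟩ := exists_adj_dist_lt hd0
    have hpy : p ≠ y := by rintro rfl; omega
    have hsub : {w ∈ (G.neighborFinset x).erase y | G.dist v x ≤ G.dist v w} ⊆
        ((G.neighborFinset x).erase y).erase p := fun w hw => by
      rw [mem_filter] at hw
      exact mem_erase.2 ⟨by rintro rfl; omega, hw.1⟩
    have := card_le_card hsub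
    have := card_erase_add_one (mem_erase.2 ⟨hpy, (mem_neighborFinset _ _ _).2 hxp⟩)
    have := hΔ x
    omega

theorem exists_cover_edgeClose_of_adj {Δ : ℕ} (hconn : G.Connected) (hΔ : ∀ u, G.degree u ≤ Δ)
    {v x y : V} (hv : G.degree v < Δ) (hxy : G.Adj x y) (hd : G.dist v x ≤ G.dist v y) :
    ∃ t : Finset (Sym2 V), #t ≤ (2 * Δ - 3) * Δ ∧ ∀ f ∈ G.edgeSet, f ≠ s(x, y) →
      EdgeClose G s(x, y) f → G.dist v x ≤ (f.map (G.dist v)).inf → f ∈ t := by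
  classical
  set W := {w ∈ (G.neighborFinset x).erase y | G.dist v x ≤ G.dist v w} ∪
    (G.neighborFinset y).erase x
  refine ⟨W.biUnion fun w => G.incidenceFinset w, ?_, ?_⟩
  · have hW : #W + 3 ≤ 2 * Δ := by
      have := card_filter_dist_le_neighborFinset_erase_add_two_le hconn hΔ hv hxy hd
      have := card_erase_add_one ((mem_neighborFinset _ _ _).2 hxy.symm)
      have : #W ≤ _ := card_union_le _ _
      have := hΔ y
      rw [card_neighborFinset_eq_degree] at *
      omega
    calc #(W.biUnion fun w => G.incidenceFinset w) ≤ #W * Δ :=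
          card_biUnion_le_card_mul _ _ _ fun w _ =>
            (card_incidenceFinset_eq_degree G w).trans_le (hΔ w)
      _ ≤ (2 * Δ - 3) * Δ := Nat.mul_le_mul_right _ (by omega)
  · intro f hf hne hclose hrank
    induction f with
    | _ a b =>
      obtain ⟨w, hw, hxw⟩ := exists_adj_mem_of_edgeClose hf hne hclose
      have hdw : G.dist v x ≤ G.dist v w :=
        hrank.trans (Sym2.inf_le_of_mem (Sym2.mem_map.2 ⟨w, hw, rfl⟩))
      refine mem_biUnion.2 ⟨w, ?_, (G.mem_incidenceFinset w _).2 ⟨hf, hw⟩⟩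
      simp only [W, mem_union, mem_filter, mem_erase, mem_neighborFinset]
      tauto

theorem exists_cover_edgeClose {Δ : ℕ} (hconn : G.Connected) (hΔ : ∀ u, G.degree u ≤ Δ) {v : V}
    (hv : G.degree v < Δ) {e : Sym2 V} (he : e ∈ G.edgeSet) :
    ∃ t : Finset (Sym2 V), #t ≤ (2 * Δ - 3) * Δ ∧ ∀ f ∈ G.edgeSet, f ≠ e → EdgeClose G e f →
      (e.map (G.dist v)).inf ≤ (f.map (G.dist v)).inf → f ∈ t := by
  induction e with
  | _ x y =>
    rcases le_total (G.dist v x) (G.dist v y) with h | h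
    · simpa [inf_of_le_left h] using exists_cover_edgeClose_of_adj hconn hΔ hv he h
    · simpa [inf_of_le_right h, Sym2.eq_swap] using
        exists_cover_edgeClose_of_adj hconn hΔ hv he.symm h

end SimpleGraph

/-- Every connected simple graph with maximum degree at most 4 containing a
vertex of degree at most 3 is strongly 22-edge-choosable. -/
theorem strongly_22_edge_choosable_of_exists_degree_le_three
    {V : Type*} [Fintype V] (G : SimpleGraph V) [DecidableRel G.Adj]
    (hconn : G.Connected) (hΔ : ∀ u, G.degree u ≤ 4)
    (hv : ∃ v, G.degree v ≤ 3) :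
    StronglyEdgeChoosable G 22 := by
  obtain ⟨v, hv⟩ := hv
  refine stronglyEdgeChoosable_of_forall_exists_cover G.edgeSet.toFinite
    (fun e => (e.map (G.dist v)).inf) fun e he => ?_
  obtain ⟨t, ht, hcover⟩ := G.exists_cover_edgeClose hconn hΔ (Nat.lt_succ_of_le hv) he
  exact ⟨t, ht.trans_lt (by norm_num), hcover⟩
end
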